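/- Contraction of actions preserves B-semantics up to ≈: if every sequence σ ∈ {ε,ic,r}* of length-bounded action sequences on transitions of a B-automaton A is replaced by the single atomic action max(σ) under the order ε < ic < r, yielding automaton A', and K is the maximum number of consecutive ic's in any transition action of A, then for corresponding runs ρ of A and ρ' of A': val(ρ') ≤ val(ρ) and val(ρ) ≤ 2K·val(ρ') + 2K. Hence ⟦A'⟧ ≈ ⟦A⟧. -/

import Mathlib

/-- Atomic counter actions of a B-automaton. -/
inductive BAct : Type
  | e   -- do nothing
  | ic  -- increment and check
  | r   -- reset
deriving DecidableEq

/-- `valAux c best l`: maximum value checked at an increment when executing the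
action sequence `l` starting from counter value `c`, with `best` already checked. -/
def valAux : ℕ → ℕ → List BAct → ℕ
  | _, best, [] => best
  | c, best, .e :: t => valAux c best t
  | c, best, .ic :: t => valAux (c + 1) (max best (c + 1)) t
  | _, best, .r :: t => valAux 0 best t

/-- Value of a sequence of atomic actions on a single counter starting at `0`:
the maximum value checked at an increment (`0` if there is none). -/
def valB (l : List BAct) : ℕ := valAux 0 0 l

/-- The order `ε < ic < r` on atomic actions. -/
def BAct.rank : BAct → ℕ
  | .e => 0
  | .ic => 1
  | .r => 2

/-- The maximal atomic action occurring in a sequence (w.r.t. `ε < ic < r`). -/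
def maxAct (l : List BAct) : BAct :=
  l.foldl (fun a b => if BAct.rank a ≤ BAct.rank b then b else a) BAct.e

/-- `f` is bounded (by a natural number) on the set `s`. -/
def BoundedOn {W : Type*} (f : W → ℕ∞) (s : Set W) : Prop :=
  ∃ N : ℕ, ∀ w ∈ s, f w < (N : ℕ∞)

/-!
Run `ρ` and its contraction `ρ'` side by side, comparing the counter values `c` of `ρ` and `c'`
of `ρ'` at block boundaries. A block whose maximal action is `ε` consists of `ε`s only, and one
whose maximal action is `ic` increments without resetting, so `c' ≤ c` is invariant and every
check of `ρ'` is matched by a check of `ρ` that is at least as large. Conversely, a block of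
value at most `K` raises the counter by at most `K`, so `c ≤ K (c' + 1)` is invariant (after a
reset `c ≤ K`); every value checked inside a block is then at most `c + K ≤ K (c' + 2)`, and `c'`
never exceeds `val ρ'`. This gives `val ρ ≤ K val ρ' + 2K`.
-/

def counter : ℕ → List BAct → ℕ
  | c, [] => c
  | c, .e :: t => counter c t
  | c, .ic :: t => counter (c + 1) t
  | _, .r :: t => counter 0 t

def maxCheck : ℕ → List BAct → ℕ
  | _, [] => 0
  | c, .e :: t => maxCheck c t
  | c, .ic :: t => max (c + 1) (maxCheck (c + 1) t)
  | _, .r :: t => maxCheck 0 t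

lemma valAux_eq_max_maxCheck (l : List BAct) (c best : ℕ) :
    valAux c best l = max best (maxCheck c l) := by
  induction l generalizing c best with
  | nil => simp [valAux, maxCheck]
  | cons a t ih =>
    cases a <;> simp only [valAux, maxCheck, ih]
    omega

lemma valB_eq_maxCheck (l : List BAct) : valB l = maxCheck 0 l := by
  simp [valB, valAux_eq_max_maxCheck]

lemma counter_append (l₁ l₂ : List BAct) (c : ℕ) :
    counter c (l₁ ++ l₂) = counter (counter c l₁) l₂ := by
  induction l₁ generalizing c with
  | nil => rfl
  | cons a t ih => cases a <;> simp only [List.cons_append, counter, ih]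

lemma maxCheck_append (l₁ l₂ : List BAct) (c : ℕ) :
    maxCheck c (l₁ ++ l₂) = max (maxCheck c l₁) (maxCheck (counter c l₁) l₂) := by
  induction l₁ generalizing c with
  | nil => simp [counter, maxCheck]
  | cons a t ih =>
    cases a <;> simp only [List.cons_append, counter, maxCheck, ih]
    omega

lemma counter_add_le (l : List BAct) (c d : ℕ) : counter (c + d) l ≤ counter c l + d := by
  induction l generalizing c with
  | nil => exact le_rfl
  | cons a t ih =>
    cases a with
    | e => exact ih c
    | ic => simpa only [counter, Nat.add_right_comm c d 1] using ih (c + 1)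
    | r => simp only [counter]; omega

lemma maxCheck_add_le (l : List BAct) (c d : ℕ) : maxCheck (c + d) l ≤ maxCheck c l + d := by
  induction l generalizing c with
  | nil => simp [maxCheck]
  | cons a t ih =>
    cases a with
    | e => exact ih c
    | ic =>
      have := ih (c + 1)
      simp only [maxCheck, Nat.add_right_comm c d 1]
      omega
    | r => simp only [maxCheck]; omega

lemma counter_le_max_maxCheck (l : List BAct) (c : ℕ) : counter c l ≤ max c (maxCheck c l) := by
  induction l generalizing c with
  | nil => exact le_max_left _ _
  | cons a t ih =>
    cases a with
    | e => exact ih c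
    | ic => have := ih (c + 1); simp only [counter, maxCheck]; omega
    | r => have := ih 0; simp only [counter, maxCheck]; omega

lemma counter_le_add_valB (l : List BAct) (c : ℕ) : counter c l ≤ c + valB l := by
  have h₁ := counter_add_le l 0 c
  have h₂ := counter_le_max_maxCheck l 0
  rw [valB_eq_maxCheck]
  simp only [zero_add, zero_le, max_eq_right] at h₁ h₂
  omega

lemma maxCheck_le_add_valB (l : List BAct) (c : ℕ) : maxCheck c l ≤ c + valB l := by
  simpa [valB_eq_maxCheck, add_comm] using maxCheck_add_le l 0 c

lemma counter_of_forall_eq_e {l : List BAct} (h : ∀ x ∈ l, x = .e) (c : ℕ) :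
    counter c l = c := by
  induction l with
  | nil => rfl
  | cons a t ih =>
    obtain rfl := h a List.mem_cons_self
    exact ih fun x hx => h x (List.mem_cons_of_mem _ hx)

lemma le_counter_of_r_notMem {l : List BAct} (h : .r ∉ l) (c : ℕ) : c ≤ counter c l := by
  induction l generalizing c with
  | nil => exact le_rfl
  | cons a t ih =>
    rw [List.mem_cons, not_or] at h
    cases a with
    | e => exact ih h.2 c
    | ic => exact (Nat.le_succ c).trans (ih h.2 (c + 1))
    | r => exact absurd rfl h.1

lemma succ_le_counter_of_ic_mem {l : List BAct} (hic : .ic ∈ l) (hr : .r ∉ l) (c : ℕ) :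
    c + 1 ≤ counter c l := by
  induction l generalizing c with
  | nil => simp at hic
  | cons a t ih =>
    rw [List.mem_cons, not_or] at hr
    cases a with
    | e => exact ih (by simpa using hic) hr.2 c
    | ic => exact le_counter_of_r_notMem hr.2 (c + 1)
    | r => exact absurd rfl hr.1

lemma succ_le_maxCheck_of_ic_mem {l : List BAct} (hic : .ic ∈ l) (hr : .r ∉ l) (c : ℕ) :
    c + 1 ≤ maxCheck c l := by
  induction l generalizing c with
  | nil => simp at hic
  | cons a t ih =>
    rw [List.mem_cons, not_or] at hr
    cases a with
    | e => exact ih (by simpa using hic) hr.2 c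
    | ic => exact le_max_left _ _
    | r => exact absurd rfl hr.1

lemma counter_eq_of_r_mem {l : List BAct} (h : .r ∈ l) (c : ℕ) : counter c l = counter 0 l := by
  induction l generalizing c with
  | nil => simp at h
  | cons a t ih =>
    cases a with
    | e => exact ih (by simpa using h) c
    | ic => exact (ih (by simpa using h) (c + 1)).trans (ih (by simpa using h) 1).symm
    | r => rfl

def maxByRank (a b : BAct) : BAct := if a.rank ≤ b.rank then b else a

lemma foldl_maxByRank_eq_or_mem (l : List BAct) (a : BAct) :
    l.foldl maxByRank a = a ∨ l.foldl maxByRank a ∈ l := by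
  induction l generalizing a with
  | nil => exact Or.inl rfl
  | cons b t ih =>
    rcases ih (maxByRank a b) with h | h
    · rw [List.foldl_cons, h, maxByRank]
      split_ifs <;> simp
    · exact Or.inr (List.mem_cons_of_mem b h)

lemma rank_le_foldl_maxByRank (l : List BAct) (a : BAct) :
    a.rank ≤ (l.foldl maxByRank a).rank ∧ ∀ x ∈ l, x.rank ≤ (l.foldl maxByRank a).rank := by
  induction l generalizing a with
  | nil => simp
  | cons b t ih =>
    obtain ⟨hab, ht⟩ := ih (maxByRank a b)
    have hmax : a.rank ≤ (maxByRank a b).rank ∧ b.rank ≤ (maxByRank a b).rank := by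
      unfold maxByRank; split_ifs <;> omega
    refine ⟨hmax.1.trans hab, fun x hx => ?_⟩
    rcases List.mem_cons.mp hx with rfl | hx
    exacts [hmax.2.trans hab, ht x hx]

lemma rank_le_rank_maxAct {l : List BAct} {x : BAct} (hx : x ∈ l) : x.rank ≤ (maxAct l).rank :=
  (rank_le_foldl_maxByRank l .e).2 x hx

lemma maxAct_mem_of_ne_e {l : List BAct} (h : maxAct l ≠ .e) : maxAct l ∈ l :=
  (foldl_maxByRank_eq_or_mem l .e).resolve_left h

lemma forall_eq_e_of_maxAct_eq_e {l : List BAct} (h : maxAct l = .e) : ∀ x ∈ l, x = .e := by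
  intro x hx
  have := rank_le_rank_maxAct hx
  rw [h] at this
  cases x <;> simp_all [BAct.rank]

lemma r_notMem_of_maxAct_eq_ic {l : List BAct} (h : maxAct l = .ic) : .r ∉ l := fun hr => by
  simpa [h, BAct.rank] using rank_le_rank_maxAct hr

lemma counter_maxCheck_maxAct_le (σ : List BAct) {c c' : ℕ} (h : c' ≤ c) :
    counter c' [maxAct σ] ≤ counter c σ ∧ maxCheck c' [maxAct σ] ≤ maxCheck c σ := by
  cases hσ : maxAct σ with
  | e => simpa [counter, maxCheck, counter_of_forall_eq_e (forall_eq_e_of_maxAct_eq_e hσ)] using h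
  | ic =>
    have hic : BAct.ic ∈ σ := hσ ▸ maxAct_mem_of_ne_e (by simp [hσ])
    have hr := r_notMem_of_maxAct_eq_ic hσ
    have h₁ := succ_le_counter_of_ic_mem hic hr c
    have h₂ := succ_le_maxCheck_of_ic_mem hic hr c
    simp only [counter, maxCheck]
    omega
  | r => simp [counter, maxCheck]

lemma counter_maxCheck_map_maxAct_le (ρ : List (List BAct)) {c c' : ℕ} (h : c' ≤ c) :
    counter c' (ρ.map maxAct) ≤ counter c ρ.flatten ∧
      maxCheck c' (ρ.map maxAct) ≤ maxCheck c ρ.flatten := by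
  induction ρ generalizing c c' with
  | nil => simpa [counter, maxCheck] using h
  | cons σ t ih =>
    rw [List.map_cons, ← List.singleton_append, List.flatten_cons, counter_append,
      counter_append, maxCheck_append, maxCheck_append]
    obtain ⟨hcnt, hchk⟩ := counter_maxCheck_maxAct_le σ h
    obtain ⟨ihc, ihk⟩ := ih hcnt
    exact ⟨ihc, max_le_max hchk ihk⟩

lemma valB_map_maxAct_le (ρ : List (List BAct)) : valB (ρ.map maxAct) ≤ valB ρ.flatten := by
  simpa only [valB_eq_maxCheck] using (counter_maxCheck_map_maxAct_le ρ le_rfl).2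

lemma counter_le_mul_counter_maxAct {σ : List BAct} {K c c' : ℕ} (hσ : valB σ ≤ K)
    (hc : c ≤ K * (c' + 1)) : counter c σ ≤ K * (counter c' [maxAct σ] + 1) := by
  cases hmax : maxAct σ with
  | e => simpa [counter, counter_of_forall_eq_e (forall_eq_e_of_maxAct_eq_e hmax)] using hc
  | ic =>
    have := counter_le_add_valB σ c
    simp only [counter]
    nlinarith
  | r =>
    have hr : BAct.r ∈ σ := hmax ▸ maxAct_mem_of_ne_e (by simp [hmax])
    have := counter_le_add_valB σ 0
    simp only [counter, counter_eq_of_r_mem hr c]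
    omega

lemma maxCheck_flatten_le {K V : ℕ} (ρ : List (List BAct)) (hρ : ∀ σ ∈ ρ, valB σ ≤ K)
    {c c' : ℕ} (hc : c ≤ K * (c' + 1)) (hc' : c' ≤ V) (hV : maxCheck c' (ρ.map maxAct) ≤ V) :
    maxCheck c ρ.flatten ≤ K * (V + 2) := by
  induction ρ generalizing c c' with
  | nil => simp [maxCheck]
  | cons σ t ih =>
    have hσ := hρ σ List.mem_cons_self
    rw [List.map_cons, ← List.singleton_append, maxCheck_append] at hV
    rw [List.flatten_cons, maxCheck_append]
    refine max_le ?_ (ih (fun τ hτ => hρ τ (List.mem_cons_of_mem σ hτ))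
      (counter_le_mul_counter_maxAct hσ hc)
      ((counter_le_max_maxCheck _ c').trans (max_le hc' (le_of_max_le_left hV)))
      (le_of_max_le_right hV))
    have := maxCheck_le_add_valB σ c
    nlinarith

lemma valB_flatten_le {K : ℕ} (ρ : List (List BAct)) (hρ : ∀ σ ∈ ρ, valB σ ≤ K) :
    valB ρ.flatten ≤ K * valB (ρ.map maxAct) + 2 * K := by
  have := maxCheck_flatten_le ρ hρ (c := 0) (c' := 0) (Nat.zero_le _) (Nat.zero_le _)
    (valB_eq_maxCheck _).ge
  rw [valB_eq_maxCheck]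
  linarith

namespace BoundedOn

variable {W : Type*} {F G : W → ℕ∞} {s : Set W}

lemma mono (hG : BoundedOn G s) (h : ∀ w ∈ s, F w ≤ G w) : BoundedOn F s :=
  let ⟨N, hN⟩ := hG
  ⟨N, fun w hw => (h w hw).trans_lt (hN w hw)⟩

lemma affine (hF : BoundedOn F s) (a b : ℕ) : BoundedOn (fun w => a * F w + b) s := by
  obtain ⟨N, hN⟩ := hF
  refine ⟨a * N + b + 1, fun w hw => ?_⟩
  calc (a : ℕ∞) * F w + b ≤ a * N + b := by gcongr; exact (hN w hw).le
    _ < ((a * N + b + 1 : ℕ) : ℕ∞) := by exact_mod_cast Nat.lt_succ_self _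

end BoundedOn

/-- contraction of actions.  If each transition of a run carries
an action sequence `σ` with `valB σ ≤ K` and each sequence is replaced by its
maximal atomic action, then for corresponding runs `ρ` (a list of action
sequences, whose value is that of their concatenation) and `ρ'` (its
contraction) one has `val(ρ') ≤ val(ρ)` and `val(ρ) ≤ 2K·val(ρ') + 2K`.
Consequently, functions related pointwise by these inequalities are bounded on
the same sets, i.e. `⟦A'⟧ ≈ ⟦A⟧`. -/
theorem contraction_of_actions (K : ℕ) :
    (∀ ρ : List (List BAct), (∀ σ ∈ ρ, valB σ ≤ K) →
      valB (ρ.map maxAct) ≤ valB ρ.flatten ∧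
      valB ρ.flatten ≤ 2 * K * valB (ρ.map maxAct) + 2 * K) ∧
    (∀ (W : Type) (F F' : W → ℕ∞),
      (∀ w, F' w ≤ F w ∧ F w ≤ 2 * K * F' w + 2 * K) →
      ∀ s : Set W, BoundedOn F s ↔ BoundedOn F' s) := by
  refine ⟨fun ρ hρ => ⟨valB_map_maxAct_le ρ, ?_⟩, fun W F F' h s => ⟨?_, ?_⟩⟩
  · calc valB ρ.flatten ≤ K * valB (ρ.map maxAct) + 2 * K := valB_flatten_le ρ hρ
      _ ≤ 2 * K * valB (ρ.map maxAct) + 2 * K := by gcongr; omega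
  · exact fun hF => hF.mono fun w _ => (h w).1
  · exact fun hF' => (hF'.affine (2 * K) (2 * K)).mono fun w _ => by exact_mod_cast (h w).2
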